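/- Let M* (the true dynamics) and M̂ (the estimated dynamics) be two deterministic transition models, and suppose the value function V^π_{M̂} is L-Lipschitz as a function of the initial state. Then for every initial state s₀, the performance of π on the true dynamics admits the additive lower bound V^π_{M*}(s₀) ≥ V^π_{M̂}(s₀) − κ · L · E_{(s,a)∼ρ^π_{M*}}[dist(M*(s,a), M̂(s,a))], where the visitation expectation is taken along the trajectory of M* from s₀ and the inequality is interpreted in the extended reals. -/

import Mathlib

open scoped ENNReal

/-- Trajectory of a deterministic model `M` under policy `π` from initial state `s₀`. -/
noncomputable def traj {S A : Type*} (M : S × A → S) (π : S → A) (s₀ : S) : ℕ → S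
  | 0 => s₀
  | n + 1 => M (traj M π s₀ n, π (traj M π s₀ n))

/-- Value function `V^π_M(s₀) = Σ_t γ^t r(s_t, π(s_t))` along the trajectory of `M`. -/
noncomputable def value {S A : Type*} (M : S × A → S) (π : S → A)
    (r : S × A → ℝ) (γ : ℝ) (s₀ : S) : ℝ :=
  ∑' t : ℕ, γ ^ t * r (traj M π s₀ t, π (traj M π s₀ t))

/-- Discounted visitation expectation (along the trajectory of `M` from `s₀`) of the
distance between the next-state predictions of `M` and `M'`, a value in `[0,∞]`. -/
noncomputable def visitDiscrepancy {S A : Type*} [MetricSpace S]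
    (M M' : S × A → S) (π : S → A) (γ : ℝ) (s₀ : S) : ℝ≥0∞ :=
  ENNReal.ofReal (1 - γ) *
    ∑' t : ℕ, ENNReal.ofReal (γ ^ t) *
      ENNReal.ofReal (dist (M (traj M π s₀ t, π (traj M π s₀ t)))
        (M' (traj M π s₀ t, π (traj M π s₀ t))))

/-!
Along the true trajectory `s_{t+1} = M*(s_t, a_t)`, `a_t = π s_t`, the Bellman equation of
`V̂ = V^π_{M̂}` gives
`γ^t (V̂ s_t - r_t) - γ^{t+1} V̂ s_{t+1} = γ^{t+1} (V̂ (M̂ (s_t, a_t)) - V̂ (M* (s_t, a_t)))`.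
Summing over `t` telescopes (`γ^t V̂ s_t` is summable since `|V̂| ≤ R / (1 - γ)`) to the
simulation lemma `V̂ s₀ - V* s₀ = ∑ γ^{t+1} (V̂ (M̂ (s_t, a_t)) - V̂ (M* (s_t, a_t)))`.
By the Lipschitz bound each term is at most `γ^{t+1} L dist (M* (s_t, a_t)) (M̂ (s_t, a_t))`,
and these bounds sum to `κ L` times the visitation expectation.
-/

theorem hasSum_sub_succ {G : Type*} [AddCommGroup G] [TopologicalSpace G]
    [IsTopologicalAddGroup G] {u : ℕ → G} (hu : Summable u) :
    HasSum (fun n => u n - u (n + 1)) (u 0) := by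
  simpa using hu.hasSum.sub ((hasSum_nat_add_iff' 1).mpr hu.hasSum)

theorem summable_pow_mul_of_abs_le {γ C : ℝ} (hγ : |γ| < 1) {f : ℕ → ℝ}
    (hf : ∀ t, |f t| ≤ C) : Summable fun t => γ ^ t * f t :=
  .of_norm_bounded ((summable_geometric_of_lt_one (abs_nonneg γ) hγ).mul_right C) fun t => by
    rw [norm_mul, norm_pow, Real.norm_eq_abs, Real.norm_eq_abs]
    exact mul_le_mul_of_nonneg_left (hf t) (by positivity)

theorem abs_tsum_pow_mul_le {γ C : ℝ} (hγ : |γ| < 1) {f : ℕ → ℝ}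
    (hf : ∀ t, |f t| ≤ C) : |∑' t, γ ^ t * f t| ≤ (1 - |γ|)⁻¹ * C := by
  rw [← Real.norm_eq_abs]
  refine tsum_of_norm_bounded ((hasSum_geometric_of_lt_one (abs_nonneg γ) hγ).mul_right C)
    fun t => ?_
  rw [norm_mul, norm_pow, Real.norm_eq_abs, Real.norm_eq_abs]
  exact mul_le_mul_of_nonneg_left (hf t) (by positivity)

theorem ENNReal.ofReal_le_tsum_ofReal_of_hasSum_of_le {a b : ℕ → ℝ} {x : ℝ}
    (ha : HasSum a x) (hab : ∀ t, a t ≤ b t) (hb : ∀ t, 0 ≤ b t) :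
    ENNReal.ofReal x ≤ ∑' t, ENNReal.ofReal (b t) := by
  by_cases hfin : ∑' t, ENNReal.ofReal (b t) = ⊤
  · simp [hfin]
  have hbs : Summable b := by
    simpa [ENNReal.toReal_ofReal (hb _)] using ENNReal.summable_toReal hfin
  rw [← ENNReal.ofReal_tsum_of_nonneg hb hbs]
  exact ENNReal.ofReal_le_ofReal (hasSum_le hab ha hbs.hasSum)

theorem EReal.coe_sub_coe_ennreal_le {a b : ℝ} {c : ℝ≥0∞}
    (h : ENNReal.ofReal (a - b) ≤ c) : (a : EReal) - c ≤ b := by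
  rcases eq_or_ne c ⊤ with rfl | hc
  · simp
  rw [← EReal.coe_ennreal_toReal hc, ← EReal.coe_sub, EReal.coe_le_coe_iff]
  linarith [(ENNReal.ofReal_le_iff_le_toReal hc).1 h]

section Dynamics

variable {S A : Type*}

theorem traj_succ' (M : S × A → S) (π : S → A) (s₀ : S) (n : ℕ) :
    traj M π s₀ (n + 1) = traj M π (M (s₀, π s₀)) n := by
  induction n with
  | zero => rfl
  | succ n ih => rw [traj, ih]; rfl

variable (M : S × A → S) (π : S → A) {r : S × A → ℝ} {R γ : ℝ}

theorem summable_value (hγ : |γ| < 1) (hR : ∀ p, |r p| ≤ R) (s₀ : S) :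
    Summable fun t => γ ^ t * r (traj M π s₀ t, π (traj M π s₀ t)) :=
  summable_pow_mul_of_abs_le hγ fun _ => hR _

theorem abs_value_le (hγ : |γ| < 1) (hR : ∀ p, |r p| ≤ R) (s₀ : S) :
    |value M π r γ s₀| ≤ (1 - |γ|)⁻¹ * R :=
  abs_tsum_pow_mul_le hγ fun _ => hR _

theorem value_eq_reward_add_mul_value (hγ : |γ| < 1) (hR : ∀ p, |r p| ≤ R) (s : S) :
    value M π r γ s = r (s, π s) + γ * value M π r γ (M (s, π s)) := by
  rw [value, (summable_value M π hγ hR s).tsum_eq_zero_add, value, ← tsum_mul_left]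
  simp only [traj_succ', pow_succ, pow_zero, one_mul, mul_comm _ γ, mul_assoc]
  rfl

theorem hasSum_value_sub_value (M' : S × A → S) (hγ : |γ| < 1) (hR : ∀ p, |r p| ≤ R)
    (s₀ : S) :
    HasSum (fun t => γ ^ (t + 1) *
        (value M' π r γ (M' (traj M π s₀ t, π (traj M π s₀ t))) -
          value M' π r γ (M (traj M π s₀ t, π (traj M π s₀ t)))))
      (value M' π r γ s₀ - value M π r γ s₀) := by
  have hu : Summable fun t => γ ^ t * value M' π r γ (traj M π s₀ t) :=
    summable_pow_mul_of_abs_le hγ fun t => abs_value_le M' π hγ hR _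
  have h := (hasSum_sub_succ hu).sub (summable_value M π hγ hR s₀).hasSum
  rw [pow_zero, one_mul] at h
  refine h.congr_fun fun t => ?_
  rw [value_eq_reward_add_mul_value M' π hγ hR (traj M π s₀ t), traj, pow_succ]
  ring

theorem ofReal_mul_visitDiscrepancy [MetricSpace S] (M' : S × A → S) {L : ℝ}
    (hγ0 : 0 ≤ γ) (hγ1 : γ < 1) (hL : 0 ≤ L) (s₀ : S) :
    ENNReal.ofReal (γ / (1 - γ) * L) * visitDiscrepancy M M' π γ s₀ =
      ∑' t, ENNReal.ofReal (γ ^ (t + 1) * (L * dist (M (traj M π s₀ t, π (traj M π s₀ t)))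
        (M' (traj M π s₀ t, π (traj M π s₀ t))))) := by
  have h1γ : 0 < 1 - γ := sub_pos.2 hγ1
  rw [visitDiscrepancy, ← mul_assoc, ← ENNReal.ofReal_mul (by positivity),
    ← ENNReal.tsum_mul_left]
  congr 1
  funext t
  rw [← ENNReal.ofReal_mul (by positivity), ← ENNReal.ofReal_mul (by positivity)]
  congr 1
  field_simp
  ring

end Dynamics

/-- If `V^π_M̂` is `L`-Lipschitz in the initial state, then in the extended reals
`V^π_{M*}(s₀) ≥ V^π_{M̂}(s₀) − κ·L·E_{(s,a)∼ρ^π_{M*}}[dist(M*(s,a), M̂(s,a))]`,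
where the discounted visitation expectation (a value in `[0,∞]`) is taken along the
trajectory of `M*` from `s₀`. -/
theorem value_true_ge_value_est_sub_model_error
    {S A : Type*} [MetricSpace S]
    (Mstar Mhat : S × A → S) (π : S → A) (r : S × A → ℝ) (R γ L : ℝ)
    (hγ0 : 0 < γ) (hγ1 : γ < 1)
    (hR : ∀ p : S × A, |r p| ≤ R)
    (hL : 0 ≤ L)
    (hLip : ∀ s s' : S, |value Mhat π r γ s - value Mhat π r γ s'| ≤ L * dist s s')
    (s₀ : S) :
    (value Mhat π r γ s₀ : EReal) -
        ((ENNReal.ofReal (γ / (1 - γ) * L) *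
          visitDiscrepancy Mstar Mhat π γ s₀ : ℝ≥0∞) : EReal) ≤
      (value Mstar π r γ s₀ : EReal) := by
  have hγ : |γ| < 1 := by rwa [abs_of_pos hγ0]
  apply EReal.coe_sub_coe_ennreal_le
  rw [ofReal_mul_visitDiscrepancy Mstar π Mhat hγ0.le hγ1 hL]
  refine ENNReal.ofReal_le_tsum_ofReal_of_hasSum_of_le
    (hasSum_value_sub_value Mstar π Mhat hγ hR s₀) (fun t => ?_) (fun t => by positivity)
  rw [dist_comm]
  exact mul_le_mul_of_nonneg_left ((le_abs_self _).trans (hLip _ _)) (by positivity)
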